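/- arXiv:1906.07230 — 3 statements merged into one kernel-verified Lean document; each statement's English description precedes it below -/
import Mathlib

section
/- Let U be a vector space over F_q (q odd) with a non-degenerate symmetric bilinear form β, let N be an isotropic subspace of U, and let O_N ⊆ O(U) be the stabilizer of N in the orthogonal group. Then the natural homomorphism from O_N to the orthogonal group O(N^⊥/N) of the induced form is surjective. -/
open Module

/-- The natural homomorphism from the stabilizer `O_N ⊆ O(U)` of an isotropic
subspace `N` to the orthogonal group of the induced form on `N^⊥/N` is surjective:
every isometry `g'` of the quotient is induced by an isometry `g` of `U`
stabilizing `N` (and hence `N^⊥`). -/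
theorem stmt5 (F : Type*) [Field F] [Fintype F] (hodd : Odd (Fintype.card F))
    (U : Type*) [AddCommGroup U] [Module F U] [FiniteDimensional F U]
    (B : LinearMap.BilinForm F U) (hsymm : ∀ x y, B x y = B y x)
    (hnd : B.Nondegenerate)
    (N : Submodule F U) (hiso : N ≤ B.orthogonal N)
    (B' : LinearMap.BilinForm F
        (↥(B.orthogonal N) ⧸ Submodule.comap (B.orthogonal N).subtype N))
    (hcompat : ∀ u v : ↥(B.orthogonal N),
      B' (Submodule.Quotient.mk u) (Submodule.Quotient.mk v) = B ↑u ↑v)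
    (g' : (↥(B.orthogonal N) ⧸ Submodule.comap (B.orthogonal N).subtype N) ≃ₗ[F]
          (↥(B.orthogonal N) ⧸ Submodule.comap (B.orthogonal N).subtype N))
    (hg' : ∀ x y, B' (g' x) (g' y) = B' x y) :
    ∃ g : U ≃ₗ[F] U,
      (∀ x y, B (g x) (g y) = B x y) ∧
      N.map (g : U →ₗ[F] U) = N ∧
      (B.orthogonal N).map (g : U →ₗ[F] U) = B.orthogonal N ∧
      (∀ x y : ↥(B.orthogonal N), g ↑x = ↑y →
        Submodule.Quotient.mk y = g' (Submodule.Quotient.mk x)) := by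
  classical
  let P : Submodule F U := B.orthogonal N
  let N₀ : Submodule F P := Submodule.comap P.subtype N
  have hrefl : B.IsRefl := fun x y h => by rw [hsymm]; exact h
  obtain ⟨W₀, hW₀⟩ := N₀.exists_isCompl
  set φ : (P ⧸ N₀) ≃ₗ[F] W₀ := Submodule.quotientEquivOfIsCompl N₀ W₀ hW₀ with hφdef
  set σ₀ : W₀ ≃ₗ[F] W₀ := (φ.symm.trans g').trans φ with hσ₀def
  have hmkσ₀ : ∀ w : W₀,
      (Submodule.Quotient.mk ↑(σ₀ w) : P ⧸ N₀) = g' (Submodule.Quotient.mk ↑w) := by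
    intro w
    have h1 : ∀ x : W₀, (Submodule.Quotient.mk ↑x : P ⧸ N₀) = φ.symm x := fun x =>
      (Submodule.quotientEquivOfIsCompl_symm_apply N₀ W₀ hW₀ x).symm
    rw [h1, h1]
    simp [hσ₀def]
  set W : Submodule F U := W₀.map P.subtype with hWdef
  set ψ : W₀ ≃ₗ[F] W := P.equivSubtypeMap W₀ with hψdef
  have hψc : ∀ a : W₀, (↑(ψ a) : U) = ↑(↑a : P) := fun a => rfl
  have hWP : W ≤ P := by
    exact (Submodule.map_subtype_le P W₀)
  have hNW : N ⊔ W = P := by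
    have h1 : N₀.map P.subtype = N := by
      rw [Submodule.map_comap_subtype, inf_eq_right.2 hiso]
    rw [hWdef, ← h1, ← Submodule.map_sup, hW₀.sup_eq_top, Submodule.map_subtype_top]
  have hNWbot : N ⊓ W = ⊥ := by
    have h1 : N₀.map P.subtype = N := by
      rw [Submodule.map_comap_subtype, inf_eq_right.2 hiso]
    rw [hWdef, ← h1, ← Submodule.map_inf _ (Submodule.injective_subtype P),
      hW₀.inf_eq_bot, Submodule.map_bot]
  -- members of W pair with B like their B' counterparts
  have hBW : ∀ a b : W₀, B ↑(↑a : P) ↑(↑b : P)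
      = B' (Submodule.Quotient.mk ↑a) (Submodule.Quotient.mk ↑b) := fun a b =>
    (hcompat _ _).symm
  have hσB : ∀ a b : W₀, B ↑(↑(σ₀ a) : P) ↑(↑(σ₀ b) : P) = B ↑(↑a : P) ↑(↑b : P) := by
    intro a b
    rw [hBW, hBW, hmkσ₀, hmkσ₀, hg']
  -- nondegeneracy of the restriction of B to W
  have hrnd : (B.restrict W).Nondegenerate := by
    refine LinearMap.BilinForm.Nondegenerate.ofSeparatingLeft ?_
    rintro ⟨w, hw⟩ h
    have hwP : ∀ p ∈ P, B p w = 0 := by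
      intro p hp
      rw [← hNW] at hp
      obtain ⟨n, hn, wv, hwv, rfl⟩ := Submodule.mem_sup.1 hp
      have h1 : B n w = 0 := hWP hw n hn
      have h2 : B wv w = 0 := by
        rw [hsymm]
        exact h ⟨wv, hwv⟩
      rw [map_add, LinearMap.add_apply, h1, h2, add_zero]
    have hwN : w ∈ N := by
      rw [← B.orthogonal_orthogonal hnd hrefl N]
      exact fun p hp => hwP p hp
    have : w ∈ N ⊓ W := ⟨hwN, hw⟩
    rw [hNWbot] at this
    exact Subtype.ext this
  have hc : IsCompl W (B.orthogonal W) :=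
    B.isCompl_orthogonal_of_restrict_nondegenerate hrefl hrnd
  set T : Submodule F U := B.orthogonal W with hTdef
  have hNT : N ≤ T := by
    intro n hn
    intro w hw
    exact hrefl n w (hWP hw n hn)
  have hWT : ∀ (w : W) (t : T), B ↑w ↑t = 0 := fun w t => t.2 ↑w w.2
  set e : (W × T) ≃ₗ[F] U := Submodule.prodEquivOfIsCompl W T hc with hedef
  set σ : W ≃ₗ[F] W := (ψ.symm.trans σ₀).trans ψ with hσdef
  set g : U ≃ₗ[F] U := (e.symm.trans (σ.prodCongr (LinearEquiv.refl F T))).trans e with hgdef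
  have key : ∀ (w : W) (t : T), g (↑w + ↑t) = ↑(σ w) + ↑t := by
    intro w t
    have h1 : e.symm (↑w + ↑t) = (w, t) := by
      rw [LinearEquiv.symm_apply_eq]
      rfl
    simp only [hgdef, LinearEquiv.trans_apply, h1, LinearEquiv.prodCongr_apply]
    rfl
  have keysymm : ∀ (w : W) (t : T), g.symm (↑w + ↑t) = ↑(σ.symm w) + ↑t := by
    intro w t
    apply g.injective
    rw [LinearEquiv.apply_symm_apply, key, LinearEquiv.apply_symm_apply]
  have gW : ∀ w : W, g ↑w = ↑(σ w) := by
    intro w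
    have := key w 0
    simpa using this
  have gT : ∀ t : T, g ↑t = ↑t := by
    intro t
    have := key 0 t
    simpa using this
  have hdecomp : ∀ u : U, ∃ (w : W) (t : T), u = ↑w + ↑t := by
    intro u
    have hu : u ∈ W ⊔ T := by rw [hc.sup_eq_top]; trivial
    obtain ⟨w, hw, t, ht, h⟩ := Submodule.mem_sup.1 hu
    exact ⟨⟨w, hw⟩, ⟨t, ht⟩, h.symm⟩
  have hσW : ∀ a b : W, B ↑(σ a) ↑(σ b) = B ↑a ↑b := by
    intro a b
    rw [hσdef]
    simp only [LinearEquiv.trans_apply]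
    rw [hψc, hψc, hσB, ← hψc, ← hψc]
    simp
  refine ⟨g, ?_, ?_, ?_, ?_⟩
  · intro x y
    obtain ⟨w1, t1, rfl⟩ := hdecomp x
    obtain ⟨w2, t2, rfl⟩ := hdecomp y
    rw [key, key]
    simp only [map_add, LinearMap.add_apply]
    have h1 : B ↑t1 ↑(σ w2) = 0 := by rw [hsymm]; exact hWT _ _
    have h2 : B ↑t1 ↑w2 = 0 := by rw [hsymm]; exact hWT _ _
    rw [hσW w1 w2, hWT (σ w1) t2, hWT w1 t2, h1, h2]
  · apply le_antisymm
    · rintro _ ⟨n, hn, rfl⟩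
      have : g n = n := gT ⟨n, hNT hn⟩
      simpa [this]
    · intro n hn
      have : g n = n := gT ⟨n, hNT hn⟩
      exact ⟨n, hn, this⟩
  · have hgP : ∀ p ∈ P, g p ∈ P := by
      intro p hp
      rw [← hNW] at hp ⊢
      obtain ⟨n, hn, wv, hwv, rfl⟩ := Submodule.mem_sup.1 hp
      have h1 : g n = n := gT ⟨n, hNT hn⟩
      have h2 : g wv = ↑(σ ⟨wv, hwv⟩) := gW ⟨wv, hwv⟩
      rw [map_add, h1, h2]
      exact Submodule.add_mem _ (Submodule.mem_sup_left hn)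
        (Submodule.mem_sup_right (σ ⟨wv, hwv⟩).2)
    have hgP' : ∀ p ∈ P, g.symm p ∈ P := by
      intro p hp
      rw [← hNW] at hp ⊢
      obtain ⟨n, hn, wv, hwv, rfl⟩ := Submodule.mem_sup.1 hp
      have h1 : g.symm n = n := by
        apply g.injective; rw [LinearEquiv.apply_symm_apply]; exact (gT ⟨n, hNT hn⟩).symm
      have h2 : g.symm wv = ↑(σ.symm ⟨wv, hwv⟩) := by
        have := keysymm ⟨wv, hwv⟩ 0
        simpa using this
      rw [map_add, h1, h2]
      exact Submodule.add_mem _ (Submodule.mem_sup_left hn)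
        (Submodule.mem_sup_right (σ.symm ⟨wv, hwv⟩).2)
    apply le_antisymm
    · rintro _ ⟨p, hp, rfl⟩
      exact hgP p hp
    · intro p hp
      exact ⟨g.symm p, hgP' p hp, g.apply_symm_apply p⟩
  · intro x y hxy
    have hx : (x : P) ∈ N₀ ⊔ W₀ := by rw [hW₀.sup_eq_top]; trivial
    obtain ⟨n₀, hn₀, w₀, hw₀, hxeq⟩ := Submodule.mem_sup.1 hx
    set w₀' : W₀ := ⟨w₀, hw₀⟩ with hw₀'def
    have hgx : g ↑x = ↑n₀ + ↑(↑(σ₀ w₀') : P) := by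
      have hx2 : (↑x : U) = ↑n₀ + ↑w₀ := by
        rw [← hxeq]; rfl
      have h1 : g ↑n₀ = ↑n₀ := gT ⟨↑n₀, hNT hn₀⟩
      have h2 : g ↑w₀ = ↑(↑(σ₀ w₀') : P) := by
        have h4 : σ (ψ w₀') = ψ (σ₀ w₀') := by
          rw [hσdef]; simp
        have h3 : g ↑(ψ w₀') = ↑(ψ (σ₀ w₀')) := by rw [gW, h4]
        exact h3
      rw [hx2, map_add, h1, h2]
    have hy : y = n₀ + ↑(σ₀ w₀') := by
      apply Subtype.ext
      rw [← hxy, hgx]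
      rfl
    have hmkn : (Submodule.Quotient.mk n₀ : P ⧸ N₀) = 0 :=
      (Submodule.Quotient.mk_eq_zero _).2 hn₀
    have hmkx : (Submodule.Quotient.mk x : P ⧸ N₀) = Submodule.Quotient.mk ↑w₀' := by
      rw [← hxeq, Submodule.Quotient.mk_add, hmkn, zero_add]
    rw [hy, Submodule.Quotient.mk_add, hmkn, zero_add, hmkσ₀, hmkx]
end

section
/- Let F : X → U be a linear map between finite-dimensional F_q-vector spaces (q odd), where U has a non-degenerate symmetric bilinear form β, and set N_F = range F ∩ (range F)^⊥. If the symmetric bilinear form B(x,y) = β(Fx, Fy) on X has rank r and dim U = t, then dim N_F ≤ ⌊(t−r)/2⌋. -/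
open Module

/-- For a linear map `f : X → U` into a `t`-dimensional space with non-degenerate
symmetric form, if the pulled-back form `B(f·, f·)` on `X` has rank `r`, then the
radical `N_f = range f ⊓ (range f)^⊥` satisfies `dim N_f ≤ ⌊(t−r)/2⌋`. -/
theorem stmt8 (F : Type*) [Field F] [Fintype F] (hodd : Odd (Fintype.card F))
    (X U : Type*) [AddCommGroup X] [Module F X] [FiniteDimensional F X]
    [AddCommGroup U] [Module F U] [FiniteDimensional F U]
    (B : LinearMap.BilinForm F U) (hsymm : ∀ x y, B x y = B y x)
    (hnd : B.Nondegenerate)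
    (f : X →ₗ[F] U) (t r : ℕ) (ht : finrank F U = t)
    (hr : finrank F X = r + finrank F (LinearMap.ker (B.compl₁₂ f f))) :
    finrank F (LinearMap.range f ⊓ B.orthogonal (LinearMap.range f) : Submodule F U)
      ≤ (t - r) / 2 := by
  have hrefl : B.IsRefl := fun x y h => (hsymm y x).trans h
  set W : Submodule F U := LinearMap.range f with hW
  set N : Submodule F U := W ⊓ B.orthogonal W with hN
  -- kernel of the pulled-back form is the preimage of N
  have hker : LinearMap.ker (B.compl₁₂ f f) = N.comap f := by
    ext x
    simp only [LinearMap.mem_ker, Submodule.mem_comap, hN, Submodule.mem_inf,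
      LinearMap.BilinForm.mem_orthogonal_iff]
    constructor
    · intro h
      refine ⟨LinearMap.mem_range_self f x, ?_⟩
      rintro _ ⟨y, rfl⟩
      have := LinearMap.congr_fun h y
      simpa [LinearMap.BilinForm.IsOrtho] using (hsymm (f y) (f x)).symm ▸ this
    · rintro ⟨-, h⟩
      ext y
      have := h (f y) (LinearMap.mem_range_self f y)
      simpa [LinearMap.BilinForm.IsOrtho, hsymm (f y) (f x)] using this
  -- ker f ≤ comap f N
  have hkf : LinearMap.ker f ≤ N.comap f := by
    intro x hx
    simp only [LinearMap.mem_ker] at hx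
    simp [Submodule.mem_comap, hx]
  -- dim (comap f N) = dim (ker f) + dim N
  have hdim : finrank F (N.comap f) = finrank F (LinearMap.ker f) + finrank F N := by
    have h1 := LinearMap.finrank_range_add_finrank_ker (f.domRestrict (N.comap f))
    have h2 : LinearMap.range (f.domRestrict (N.comap f)) = N := by
      rw [LinearMap.range_domRestrict]
      exact Submodule.map_comap_eq_of_le (by simp [hN, hW])
    have h3 : finrank F (LinearMap.ker (f.domRestrict (N.comap f)))
        = finrank F (LinearMap.ker f) := by
      rw [LinearMap.ker_domRestrict]
      exact (Submodule.comapSubtypeEquivOfLe hkf).finrank_eq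
    rw [h2, h3] at h1
    omega
  have hrank : finrank F X = finrank F W + finrank F (LinearMap.ker f) :=
    (LinearMap.finrank_range_add_finrank_ker f).symm
  have horth : finrank F (B.orthogonal W) = t - finrank F W := by
    rw [LinearMap.BilinForm.finrank_orthogonal hnd, ht]
  have hWle : finrank F W ≤ t := ht ▸ Submodule.finrank_le W
  have hNle : finrank F N ≤ finrank F (B.orthogonal W) :=
    Submodule.finrank_mono inf_le_right
  rw [hker, hdim] at hr
  omega
end

section
/- Let p be an odd prime and let F_p³ carry the bilinear form β(x,y) = x₁y₂ + x₂y₁ − x₃y₃. For a ∈ F_p define x_a = (1, a²/2, a) and x_∞ = (0,2,0). Then every isotropic vector of F_p³ is a scalar multiple of exactly one x_a with a ∈ F_p ∪ {∞}; moreover for all a ≠ b in F_p, β(x_a, x_b) = (a−b)²/2 and β(x_a, x_∞) = 2, so the Legendre symbol of β(x_a,x_b) equals that of 2 for all distinct a,b ∈ F_p ∪ {∞}. -/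
open Module

private lemma two_ne_zero_zmod (p : ℕ) [Fact p.Prime] (hodd : p ≠ 2) :
    (2 : ZMod p) ≠ 0 := by
  have : ((2 : ℕ) : ZMod p) ≠ 0 := by
    rw [Ne, ZMod.natCast_eq_zero_iff]
    intro h
    exact hodd ((Nat.prime_dvd_prime_iff_eq Fact.out Nat.prime_two).mp h)
  simpa using this

private lemma legendre_val (p : ℕ) [Fact p.Prime] (x : ZMod p) :
    legendreSym p ((x.val : ℤ)) = quadraticChar (ZMod p) x := by
  rw [legendreSym]
  push_cast
  rw [ZMod.natCast_val, ZMod.cast_id]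

private lemma quadChar_key (p : ℕ) [Fact p.Prime] (hodd : p ≠ 2)
    {a b : ZMod p} (hab : a ≠ b) :
    quadraticChar (ZMod p) ((a - b) ^ 2 / 2) = quadraticChar (ZMod p) 2 := by
  have h2 : (2 : ZMod p) ≠ 0 := two_ne_zero_zmod p hodd
  have hd : (a - b) / 2 ≠ 0 := div_ne_zero (sub_ne_zero.mpr hab) h2
  have h : (a - b) ^ 2 / 2 = ((a - b) / 2) ^ 2 * 2 := by
    field_simp
  rw [h, map_mul, quadraticChar_sq_one' hd, one_mul]

/-- In `F_p³` with form `β(x,y) = x₁y₂ + x₂y₁ − x₃y₃`, every nonzero isotropic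
vector is a scalar multiple of exactly one of the vectors `x_a = (1, a²/2, a)`
(`a ∈ F_p`) or `x_∞ = (0,2,0)`; moreover `β(x_a, x_b) = (a−b)²/2` for `a ≠ b`,
`β(x_a, x_∞) = 2`, and the Legendre symbol of `β(x_s, x_t)` equals that of `2`
for all distinct indices `s, t`. -/
theorem stmt15 (p : ℕ) [Fact p.Prime] (hodd : p ≠ 2) :
    letI β : (Fin 3 → ZMod p) → (Fin 3 → ZMod p) → ZMod p := fun x y =>
      x 0 * y 1 + x 1 * y 0 - x 2 * y 2
    letI X : Option (ZMod p) → (Fin 3 → ZMod p) := fun s =>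
      match s with
      | some a => ![1, a ^ 2 / 2, a]
      | none => ![0, 2, 0]
    (∀ v : Fin 3 → ZMod p, v ≠ 0 → β v v = 0 →
      ∃! s : Option (ZMod p), ∃ c : ZMod p, v = c • X s) ∧
    (∀ a b : ZMod p, a ≠ b → β (X (some a)) (X (some b)) = (a - b) ^ 2 / 2) ∧
    (∀ a : ZMod p, β (X (some a)) (X none) = 2) ∧
    (∀ s t : Option (ZMod p), s ≠ t →
      legendreSym p ((β (X s) (X t)).val : ℤ) = legendreSym p 2) := by
  have h2 : (2 : ZMod p) ≠ 0 := two_ne_zero_zmod p hodd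
  have hL2 : legendreSym p 2 = quadraticChar (ZMod p) 2 := by
    rw [legendreSym]; norm_num
  have hβab : ∀ a b : ZMod p,
      (1 : ZMod p) * (b ^ 2 / 2) + a ^ 2 / 2 * 1 - a * b = (a - b) ^ 2 / 2 := by
    intro a b
    field_simp
    ring
  refine ⟨?_, ?_, ?_, ?_⟩
  · intro v hv hiso
    have hβvv : v 0 * v 1 + v 1 * v 0 - v 2 * v 2 = 0 := hiso
    by_cases h0 : v 0 = 0
    · have h2v : v 2 = 0 := by
        have : v 2 * v 2 = 0 := by linear_combination -hβvv + v 1 * h0 + v 1 * h0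
        exact mul_self_eq_zero.mp this
      have h1v : v 1 ≠ 0 := by
        intro h1
        apply hv
        funext i
        fin_cases i <;> simpa [h0, h1, h2v]
      refine ⟨none, ⟨v 1 / 2, ?_⟩, ?_⟩
      · show v = (v 1 / 2) • ![0, 2, 0]
        funext i
        fin_cases i <;> simp [h0, h2v] <;> field_simp
      · rintro t ⟨c, hc⟩
        match t with
        | none => rfl
        | some a =>
          exfalso
          have e0 : v 0 = c * 1 := by
            have := congrFun hc 0; simpa using this
          rw [h0, mul_one] at e0
          have e1 : v 1 = c * (a ^ 2 / 2) := by
            have := congrFun hc 1; simpa using this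
          rw [← e0, zero_mul] at e1
          exact h1v e1
    · refine ⟨some (v 2 / v 0), ⟨v 0, ?_⟩, ?_⟩
      · show v = v 0 • ![1, (v 2 / v 0) ^ 2 / 2, v 2 / v 0]
        funext i
        fin_cases i <;> simp
        · field_simp
          linear_combination hβvv
        · field_simp
      · rintro t ⟨c, hc⟩
        match t with
        | none =>
          exfalso
          have e0 : v 0 = c * 0 := by
            have := congrFun hc 0; simpa using this
          rw [mul_zero] at e0
          exact h0 e0
        | some b =>
          have e0 : v 0 = c * 1 := by
            have := congrFun hc 0; simpa using this
          rw [mul_one] at e0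
          have e2 : v 2 = c * b := by
            have := congrFun hc 2; simpa using this
          have hc : c ≠ 0 := by rw [e0] at h0; exact h0
          show (some b : Option (ZMod p)) = some (v 2 / v 0)
          congr 1
          rw [e2, e0, mul_div_cancel_left₀ _ hc]
  · intro a b _
    exact hβab a b
  · intro a
    show (1 : ZMod p) * 2 + a ^ 2 / 2 * 0 - a * 0 = 2
    ring
  · intro s t hst
    match s, t with
    | some a, some b =>
      have hab : a ≠ b := by simpa using hst
      have : ((1 : ZMod p) * (b ^ 2 / 2) + a ^ 2 / 2 * 1 - a * b)
          = (a - b) ^ 2 / 2 := hβab a b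
      show legendreSym p
        (((1 : ZMod p) * (b ^ 2 / 2) + a ^ 2 / 2 * 1 - a * b).val : ℤ)
        = legendreSym p 2
      rw [this, legendre_val, hL2, quadChar_key p hodd hab]
    | some a, none =>
      show legendreSym p
        (((1 : ZMod p) * 2 + a ^ 2 / 2 * 0 - a * 0).val : ℤ) = legendreSym p 2
      have : (1 : ZMod p) * 2 + a ^ 2 / 2 * 0 - a * 0 = 2 := by ring
      rw [this, legendre_val, hL2]
    | none, some b =>
      show legendreSym p
        (((0 : ZMod p) * (b ^ 2 / 2) + 2 * 1 - 0 * b).val : ℤ) = legendreSym p 2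
      have : (0 : ZMod p) * (b ^ 2 / 2) + 2 * 1 - 0 * b = 2 := by ring
      rw [this, legendre_val, hL2]
    | none, none => exact absurd rfl hst
end
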